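/- arXiv:2109.07027 — 8 statements merged into one kernel-verified Lean document; each statement's English description precedes it below -/
import Mathlib

section
/- Let t0 ≤ t1 be real numbers, y : [t0, t1] → ℝ differentiable, α a locally Lipschitz class-K function, and w : [t0,t1] → ℝ a function with 0 < η₁ ≤ w(t) ≤ η₂ for all t. Suppose that for every t ∈ [t0,t1] with y(t) ≤ 0 one has y'(t) ≤ α(−y(t))·w(t) − w(t). If y(t0) ≤ 0, then y(t) ≤ 0 for all t ∈ [t0, t1]. -/
open Set

/-- Scalar comparison core of Lemma 1: the differential inequality
`y' ≤ α(−y)·w − w` (whenever `y ≤ 0`) renders `{y ≤ 0}` forward invariant. -/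
theorem scalar_cbf_forward_invariance
    (t0 t1 : ℝ) (ht01 : t0 ≤ t1)
    (y y' : ℝ → ℝ)
    (hy : ∀ t ∈ Icc t0 t1, HasDerivAt y (y' t) t)
    -- α is a locally Lipschitz class-K function
    (α : ℝ → ℝ) (hα0 : α 0 = 0)
    (hαmono : StrictMonoOn α (Ici 0))
    (hαcont : ContinuousOn α (Ici 0))
    (hαlip : ∀ s ∈ Ici (0 : ℝ), ∃ K : NNReal, ∃ U ∈ nhdsWithin s (Ici 0),
      LipschitzOnWith K α U)
    (w : ℝ → ℝ) (η₁ η₂ : ℝ) (hη₁ : 0 < η₁)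
    (hw : ∀ t ∈ Icc t0 t1, η₁ ≤ w t ∧ w t ≤ η₂)
    (hbar : ∀ t ∈ Icc t0 t1, y t ≤ 0 → y' t ≤ α (-(y t)) * w t - w t)
    (hinit : y t0 ≤ 0) :
    ∀ t ∈ Icc t0 t1, y t ≤ 0 := by
  by_contra h
  push_neg at h
  obtain ⟨ts, hts, hyts⟩ := h
  set A : Set ℝ := {t | t ∈ Icc t0 ts ∧ 0 < y t} with hA
  have htsA : ts ∈ A := ⟨⟨hts.1, le_refl _⟩, hyts⟩
  have hne : A.Nonempty := ⟨ts, htsA⟩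
  have hbdd : BddBelow A := ⟨t0, fun x hx => hx.1.1⟩
  set τ := sInf A with hτ
  have hτ0 : t0 ≤ τ := le_csInf hne fun x hx => hx.1.1
  have hτts : τ ≤ ts := csInf_le hbdd htsA
  have hτIcc : τ ∈ Icc t0 t1 := ⟨hτ0, hτts.trans hts.2⟩
  have hcont : ContinuousAt y τ := (hy τ hτIcc).continuousAt
  -- y τ ≥ 0
  have hge : 0 ≤ y τ := by
    by_contra hlt
    push_neg at hlt
    obtain ⟨ε, hε, hball⟩ := Metric.eventually_nhds_iff.mp
      (hcont.eventually (eventually_lt_nhds hlt))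
    obtain ⟨a, haA, halt⟩ := exists_lt_of_csInf_lt hne (by linarith : sInf A < τ + ε)
    have hτa : τ ≤ a := csInf_le hbdd haA
    have : y a < 0 := hball (by rw [Real.dist_eq, abs_of_nonneg (by linarith)]; linarith)
    linarith [haA.2]
  -- y τ ≤ 0
  have hle : y τ ≤ 0 := by
    rcases eq_or_lt_of_le hτ0 with heq | hlt
    · rwa [← heq]
    by_contra hpos
    push_neg at hpos
    obtain ⟨ε, hε, hball⟩ := Metric.eventually_nhds_iff.mp
      (hcont.eventually (eventually_gt_nhds hpos))
    set b := max t0 (τ - ε / 2) with hb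
    have hbτ : b < τ := by
      apply max_lt hlt; linarith
    have hbA : b ∈ A := by
      refine ⟨⟨le_max_left _ _, hbτ.le.trans hτts⟩, ?_⟩
      apply hball
      rw [Real.dist_eq, abs_of_nonpos (by linarith)]
      have : τ - ε / 2 ≤ b := le_max_right _ _
      linarith
    exact absurd (csInf_le hbdd hbA) (not_le.mpr hbτ)
  have hyτ : y τ = 0 := le_antisymm hle hge
  -- derivative is strictly negative at τ
  have hder : y' τ ≤ -η₁ := by
    have := hbar τ hτIcc hle
    rw [hyτ] at this
    simp [hα0] at this
    linarith [(hw τ hτIcc).1]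
  have hderneg : y' τ < 0 := by linarith
  -- slope eventually negative
  have hslope : ∀ᶠ t in nhdsWithin τ {τ}ᶜ, slope y τ t < 0 :=
    (hasDerivAt_iff_tendsto_slope.mp (hy τ hτIcc)).eventually
      (eventually_lt_nhds hderneg)
  rw [eventually_nhdsWithin_iff] at hslope
  obtain ⟨ε, hε, hball⟩ := Metric.eventually_nhds_iff.mp hslope
  obtain ⟨a, haA, halt⟩ := exists_lt_of_csInf_lt hne (by linarith : sInf A < τ + ε)
  have hτa : τ ≤ a := csInf_le hbdd haA
  have haτ : a ≠ τ := by
    intro heq; rw [heq] at haA; linarith [haA.2, hyτ ▸ haA.2]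
  have hs : slope y τ a < 0 := by
    apply hball (by rw [Real.dist_eq, abs_of_nonneg (by linarith)]; linarith) haτ
  have hpos : 0 < a - τ := sub_pos.mpr (lt_of_le_of_ne hτa (Ne.symm haτ))
  rw [slope_def_field, div_neg_iff] at hs
  rcases hs with ⟨h1, h2⟩ | ⟨h1, h2⟩
  · linarith
  · rw [hyτ] at h1; linarith [haA.2]
end

section
/- Let Φ : ℝ → ℝ be a continuous, strictly decreasing bijection with inverse Φ⁻¹, and let δ ≥ 0. For any real numbers u ≤ v, if Φ⁻¹(Φ(0) − (1/2)·v·|v| + δ) ≤ 0, then u ≤ √(2δ). -/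
/-- Algebraic core of Theorem 2: membership in the relaxed safe set at contact
bounds the contact velocity by `√(2δ)`. -/
theorem contact_velocity_bound
    (Φ Φinv : ℝ → ℝ)
    (hΦcont : Continuous Φ) (hΦanti : StrictAnti Φ) (hΦbij : Function.Bijective Φ)
    (hinvl : Function.LeftInverse Φinv Φ) (hinvr : Function.RightInverse Φinv Φ)
    (δ : ℝ) (hδ : 0 ≤ δ)
    (u v : ℝ) (huv : u ≤ v)
    (hsafe : Φinv (Φ 0 - (1 / 2) * (v * |v|) + δ) ≤ 0) :
    u ≤ Real.sqrt (2 * δ) := by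
  have h1 : Φ 0 ≤ Φ (Φinv (Φ 0 - (1 / 2) * (v * |v|) + δ)) := hΦanti.antitone hsafe
  rw [hinvr] at h1
  have h2 : v * |v| ≤ 2 * δ := by linarith
  have hv : v ≤ Real.sqrt (2 * δ) := by
    rcases le_or_gt v 0 with h | h
    · exact h.trans (Real.sqrt_nonneg _)
    · have : v * v ≤ 2 * δ := by rwa [abs_of_pos h] at h2
      have := Real.sqrt_le_sqrt this
      rwa [Real.sqrt_mul_self h.le] at this
  exact huv.trans hv
end

section
/- Let t0 be a real number, y : [t0, ∞) → ℝ differentiable with y(t) ≤ 0 for all t, α a class-K function, c ≥ 0 with α(c) = 2, and w : [t0,∞) → ℝ with w(t) ≥ η₁ > 0 for all t. Suppose that for every t ∈ [t0,∞): y'(t) ≥ α(−y(t))·w(t) − 2·w(t). Then liminf_{t→∞} y(t) ≥ −c. -/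
open Set Filter

/-- Scalar core of Lemma 3: under `y' ≥ α(−y)·w − 2w`, the trajectory
asymptotically approaches the boundary layer `{−c ≤ y ≤ 0}`. -/
theorem scalar_liminf_boundary_layer
    (t0 : ℝ) (y y' : ℝ → ℝ)
    (hy : ∀ t ∈ Ici t0, HasDerivAt y (y' t) t)
    (hyle : ∀ t ∈ Ici t0, y t ≤ 0)
    -- α is a class-K function
    (α : ℝ → ℝ) (hα0 : α 0 = 0)
    (hαmono : StrictMonoOn α (Ici 0))
    (hαcont : ContinuousOn α (Ici 0))
    (c : ℝ) (hc : 0 ≤ c) (hαc : α c = 2)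
    (w : ℝ → ℝ) (η₁ : ℝ) (hη₁ : 0 < η₁)
    (hw : ∀ t ∈ Ici t0, η₁ ≤ w t)
    (hbar : ∀ t ∈ Ici t0, y' t ≥ α (-(y t)) * w t - 2 * w t) :
    -c ≤ liminf (fun t => y t) atTop := by
  -- boundedness of y above (eventually ≤ 0) gives coboundedness of liminf
  have hbdd : IsBoundedUnder (· ≤ ·) atTop fun t => y t :=
    ⟨0, eventually_atTop.2 ⟨t0, fun t ht => hyle t ht⟩⟩
  have hcob : IsCoboundedUnder (· ≥ ·) atTop fun t => y t :=
    hbdd.isCoboundedUnder_ge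
  -- continuity of y on Ici t0
  have hycont : ∀ s ∈ Ici t0, ∀ t, s ≤ t → ContinuousOn y (Icc s t) := by
    intro s hs t _ x hx
    exact ((hy x (le_trans hs hx.1)).continuousAt).continuousWithinAt
  -- MVT helper
  have hmvt : ∀ s ∈ Ici t0, ∀ t, s < t →
      ∃ ξ ∈ Ioo s t, y' ξ = (y t - y s) / (t - s) := by
    intro s hs t hst
    exact exists_hasDerivAt_eq_slope y y' hst (hycont s hs t hst.le)
      (fun x hx => hy x (le_trans hs hx.1.le))
  suffices h : ∀ ε > (0:ℝ), -c - ε ≤ liminf (fun t => y t) atTop by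
    by_contra hcon
    push_neg at hcon
    have := h ((-c - liminf (fun t => y t) atTop) / 2) (by linarith)
    linarith
  intro ε hε
  -- the positive drift δ
  set δ : ℝ := (α (c + ε) - 2) * η₁ with hδdef
  have hαcε : 2 < α (c + ε) := by
    have := hαmono hc (mem_Ici.2 (by linarith) : c + ε ∈ Ici (0:ℝ)) (by linarith)
    linarith [hαc ▸ this]
  have hδ : 0 < δ := by
    apply mul_pos (by linarith) hη₁
  -- key drift estimate
  have key : ∀ t ∈ Ici t0, y t ≤ -c - ε → δ ≤ y' t := by
    intro t ht hyt
    have h1 : c + ε ≤ -(y t) := by linarith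
    have h2 : α (c + ε) ≤ α (-(y t)) :=
      hαmono.monotoneOn (mem_Ici.2 (by linarith) : c + ε ∈ Ici (0:ℝ))
        (by simp only [mem_Ici]; linarith : -(y t) ∈ Ici (0:ℝ)) h1
    have h3 := hbar t ht
    have h4 := hw t ht
    have h5 : (α (c + ε) - 2) * η₁ ≤ (α (-(y t)) - 2) * w t :=
      mul_le_mul (by linarith) h4 hη₁.le (by linarith)
    nlinarith
  -- Step 1: there is T ≥ t0 with y T > -c - ε
  have step1 : ∃ T ∈ Ici t0, -c - ε < y T := by
    by_contra hcon
    push_neg at hcon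
    set t1 : ℝ := t0 + (1 - y t0) / δ with ht1
    have hpos : 0 < (1 - y t0) / δ :=
      div_pos (by linarith [hyle t0 (le_refl t0)]) hδ
    have ht01 : t0 < t1 := by rw [ht1]; linarith
    obtain ⟨ξ, hξ, hslope⟩ := hmvt t0 (le_refl t0) t1 ht01
    have hξmem : ξ ∈ Ici t0 := le_of_lt hξ.1
    have hkey := key ξ hξmem (hcon ξ hξmem)
    rw [hslope] at hkey
    have h6 : δ * (t1 - t0) ≤ y t1 - y t0 :=
      (le_div_iff₀ (by linarith : (0:ℝ) < t1 - t0)).mp hkey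
    have h7 : δ * (t1 - t0) = 1 - y t0 := by
      rw [ht1]; field_simp; ring
    have := hyle t1 (le_of_lt ht01)
    linarith
  obtain ⟨T, hT, hyT⟩ := step1
  -- Step 2: for all t ≥ T, y t ≥ -c - ε
  have step2 : ∀ t, T ≤ t → -c - ε ≤ y t := by
    intro t hTt
    by_contra hcon
    push_neg at hcon
    have hTt' : T < t := by
      rcases eq_or_lt_of_le hTt with h | h
      · exfalso; rw [← h] at hcon; linarith
      · exact h
    set S : Set ℝ := Icc T t ∩ y ⁻¹' (Ici (-c - ε)) with hS
    have hSne : S.Nonempty := ⟨T, ⟨le_refl T, hTt⟩, le_of_lt hyT⟩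
    have hSbdd : BddAbove S := ⟨t, fun s hs => hs.1.2⟩
    have hSclosed : IsClosed S :=
      (hycont T hT t hTt).preimage_isClosed_of_isClosed isClosed_Icc isClosed_Ici
    have huS : sSup S ∈ S := hSclosed.csSup_mem hSne hSbdd
    set u : ℝ := sSup S with hu
    have huIcc : u ∈ Icc T t := huS.1
    have hyu : -c - ε ≤ y u := huS.2
    have hut : u < t := lt_of_le_of_ne huIcc.2 (by
      intro h; rw [h] at hyu; linarith)
    obtain ⟨ξ, hξ, hslope⟩ := hmvt u (le_trans hT huIcc.1) t hut
    -- y ξ < -c - ε since ξ > u = sSup S and ξ ≤ t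
    have hyξ : y ξ ≤ -c - ε := by
      by_contra hyξ'
      push_neg at hyξ'
      have : ξ ∈ S := ⟨⟨le_trans huIcc.1 hξ.1.le, hξ.2.le⟩, le_of_lt hyξ'⟩
      exact absurd (le_csSup hSbdd this) (not_le.2 hξ.1)
    have hkey := key ξ (le_trans hT (le_trans huIcc.1 hξ.1.le)) hyξ
    rw [hslope] at hkey
    have : 0 < (y t - y u) / (t - u) := lt_of_lt_of_le hδ hkey
    have hnum : y t - y u < 0 := by linarith
    have := div_neg_of_neg_of_pos hnum (by linarith : (0:ℝ) < t - u)
    linarith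
  exact le_liminf_of_le hcob (eventually_atTop.2 ⟨T, fun t ht => step2 t ht⟩)
end

section
/- Let t0 be a real number, y : [t0, ∞) → ℝ differentiable, α a class-K function, c ≥ 0 with α(c) = 2, and w : [t0,∞) → ℝ with w(t) ≥ η₁ > 0 for all t. Suppose that for every t ∈ [t0,∞): y'(t) ≥ α(−y(t))·w(t) − 2·w(t), and y(t) ≤ 0 for all t. Then for every ε > c with y(t0) < −ε, there exists a finite time T with t0 ≤ T ≤ t0 + (−ε − y(t0)) / ((α(ε) − 2)·η₁) such that y(T) ≥ −ε. -/
open Set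

/-- Quantitative finite-time version (Remark 1): while `y < −ε` with `ε > c`,
the derivative is at least `(α(ε) − 2)·η₁ > 0`, so `{y ≥ −ε}` is reached in
finite time. -/
theorem scalar_finite_time_reach
    (t0 : ℝ) (y y' : ℝ → ℝ)
    (hy : ∀ t ∈ Ici t0, HasDerivAt y (y' t) t)
    -- α is a class-K function
    (α : ℝ → ℝ) (hα0 : α 0 = 0)
    (hαmono : StrictMonoOn α (Ici 0))
    (hαcont : ContinuousOn α (Ici 0))
    (c : ℝ) (hc : 0 ≤ c) (hαc : α c = 2)
    (w : ℝ → ℝ) (η₁ : ℝ) (hη₁ : 0 < η₁)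
    (hw : ∀ t ∈ Ici t0, η₁ ≤ w t)
    (hbar : ∀ t ∈ Ici t0, y' t ≥ α (-(y t)) * w t - 2 * w t)
    (hyle : ∀ t ∈ Ici t0, y t ≤ 0) :
    ∀ ε > c, y t0 < -ε →
      ∃ T : ℝ, t0 ≤ T ∧ T ≤ t0 + (-ε - y t0) / ((α ε - 2) * η₁) ∧ -ε ≤ y T := by
  intro ε hε hy0
  have hε0 : 0 ≤ ε := hc.trans hε.le
  have hαε : 2 < α ε := by
    have := hαmono hc hε0 hε
    linarith [hαc]
  set δ : ℝ := (α ε - 2) * η₁ with hδdef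
  have hδ : 0 < δ := mul_pos (by linarith) hη₁
  set Tmax : ℝ := t0 + (-ε - y t0) / δ with hTdef
  have hnum : 0 < -ε - y t0 := by linarith
  have hT0 : t0 ≤ Tmax := by
    have := div_pos hnum hδ
    simp only [hTdef]; linarith
  by_contra hcon
  push_neg at hcon
  have hylt : ∀ t ∈ Icc t0 Tmax, y t < -ε := by
    intro t ht
    rcases lt_or_ge (y t) (-ε) with h | h
    · exact h
    · exact absurd h (not_le.mpr (hcon t ht.1 ht.2))
  -- derivative lower bound on [t0, Tmax]
  have hderiv : ∀ t ∈ interior (Icc t0 Tmax), δ ≤ deriv y t := by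
    intro t ht
    have ht' : t ∈ Icc t0 Tmax := interior_subset ht
    have htI : t ∈ Ici t0 := ht'.1
    have hd : deriv y t = y' t := (hy t htI).deriv
    have hyt : y t < -ε := hylt t ht'
    have hαle : α ε ≤ α (-(y t)) := by
      have h0 : y t ≤ 0 := hyle t htI
      exact (hαmono (mem_Ici.mpr hε0) (mem_Ici.mpr (by linarith)) (by linarith)).le
    have hwt : η₁ ≤ w t := hw t htI
    have h1 : (α ε - 2) * η₁ ≤ (α (-(y t)) - 2) * w t := by
      apply mul_le_mul (by linarith) hwt hη₁.le (by linarith)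
    have := hbar t htI
    rw [hd]
    nlinarith
  have hcont : ContinuousOn y (Icc t0 Tmax) := fun t ht =>
    ((hy t ht.1).continuousAt).continuousWithinAt
  have hdiff : DifferentiableOn ℝ y (interior (Icc t0 Tmax)) := fun t ht =>
    ((hy t (interior_subset ht).1).differentiableAt).differentiableWithinAt
  have key := Convex.mul_sub_le_image_sub_of_le_deriv (convex_Icc t0 Tmax) hcont hdiff hderiv
    t0 (left_mem_Icc.mpr hT0) Tmax (right_mem_Icc.mpr hT0)
    hT0
  have : δ * (Tmax - t0) = -ε - y t0 := by
    simp only [hTdef]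
    field_simp
    ring
  rw [this] at key
  have := hylt Tmax (right_mem_Icc.mpr hT0)
  linarith
end

section
/- Let t0 be a real number, y : [t0, ∞) → ℝ differentiable, α a class-K function, c ≥ 0 with α(c) = 2, and w : [t0,∞) → ℝ with w(t) ≥ η₁ > 0 for all t. Suppose that for every t ∈ [t0,∞): y'(t) ≥ α(−y(t))·w(t) − 2·w(t). If y(T) ≥ −c for some T ≥ t0, then y(t) ≥ −c for all t ≥ T. -/
open Set

/-- Invariance of the boundary layer: once the trajectory enters
`{y ≥ −c}`, it remains there for all future time. -/
theorem boundary_layer_invariance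
    (t0 : ℝ) (y y' : ℝ → ℝ)
    (hy : ∀ t ∈ Ici t0, HasDerivAt y (y' t) t)
    -- α is a class-K function
    (α : ℝ → ℝ) (hα0 : α 0 = 0)
    (hαmono : StrictMonoOn α (Ici 0))
    (hαcont : ContinuousOn α (Ici 0))
    (c : ℝ) (hc : 0 ≤ c) (hαc : α c = 2)
    (w : ℝ → ℝ) (η₁ : ℝ) (hη₁ : 0 < η₁)
    (hw : ∀ t ∈ Ici t0, η₁ ≤ w t)
    (hbar : ∀ t ∈ Ici t0, y' t ≥ α (-(y t)) * w t - 2 * w t)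
    (T : ℝ) (hT : t0 ≤ T) (hyT : -c ≤ y T) :
    ∀ t, T ≤ t → -c ≤ y t := by
  intro t1 ht1
  by_contra hbad
  push_neg at hbad
  -- continuity of y on [t0, ∞)
  have hycont : ContinuousOn y (Ici t0) := fun x hx =>
    (hy x hx).continuousAt.continuousWithinAt
  -- the set of times in [T, t1] where y ≥ -c
  set S : Set ℝ := Icc T t1 ∩ y ⁻¹' Ici (-c) with hS
  have hIcc_sub : Icc T t1 ⊆ Ici t0 := fun x hx => le_trans hT hx.1
  have hSclosed : IsClosed S :=
    (hycont.mono hIcc_sub).preimage_isClosed_of_isClosed isClosed_Icc isClosed_Ici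
  have hSne : S.Nonempty := ⟨T, ⟨le_refl T, ht1⟩, hyT⟩
  have hSbdd : BddAbove S := ⟨t1, fun x hx => hx.1.2⟩
  set s := sSup S with hs
  have hsmem : s ∈ S := hSclosed.csSup_mem hSne hSbdd
  have hys : -c ≤ y s := hsmem.2
  have hsT : T ≤ s := hsmem.1.1
  have hst1 : s ≤ t1 := hsmem.1.2
  have hslt : s < t1 := hst1.lt_of_ne fun h => absurd hys (by rw [h]; exact not_le.mpr hbad)
  -- past s, y < -c
  have hafter : ∀ x ∈ Ioc s t1, y x < -c := by
    intro x hx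
    by_contra hge
    push_neg at hge
    have : x ∈ S := ⟨⟨le_trans hsT hx.1.le, hx.2⟩, hge⟩
    exact absurd (le_csSup hSbdd this) (not_le.mpr hx.1)
  -- y is strictly monotone on [s, t1]
  have hmono : StrictMonoOn y (Icc s t1) := by
    apply strictMonoOn_of_deriv_pos (convex_Icc s t1)
    · exact hycont.mono (fun x hx => le_trans (le_trans hT hsT) hx.1)
    · intro x hx
      rw [interior_Icc] at hx
      have hxt0 : x ∈ Ici t0 := le_trans (le_trans hT hsT) hx.1.le
      rw [(hy x hxt0).deriv]
      have hyx : y x < -c := hafter x ⟨hx.1, hx.2.le⟩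
      have h1 : c < -(y x) := by linarith
      have hα2 : 2 < α (-(y x)) := by
        rw [← hαc]; exact hαmono hc (le_trans hc h1.le) h1
      have hwx : η₁ ≤ w x := hw x hxt0
      have := hbar x hxt0
      nlinarith
  have := hmono ⟨le_refl s, hslt.le⟩ ⟨hslt.le, le_refl t1⟩ hslt
  linarith
end

section
/- Let Φ : ℝ → ℝ be a continuous, strictly decreasing bijection with inverse Φ⁻¹, let l ≥ 0, w ≥ 0, γ₁ > 0, and γ₂ be real numbers, and define ε := −Φ⁻¹(Φ(0) + γ₂²/2 − (γ₁ + 2·l·w)²/2). For all real numbers a ≤ 0 and v: if Φ⁻¹(Φ(a) − (1/2)·v·|v| + γ₂²/2) ≥ −ε, then v ≥ γ₁ + 2·l·w; moreover, if a < 0, then v > γ₁ + 2·l·w. -/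
/-- Key inequality in the proof of Theorem 4 (equations (14)–(15)): every
state in the boundary layer `{−ε ≤ H₁}` with `h ≤ 0` has worst-case approach
rate at least `γ₁ + 2·l·w`, strictly so when `h < 0`. -/
theorem boundary_layer_rate_bound
    (Φ Φinv : ℝ → ℝ)
    (hΦcont : Continuous Φ) (hΦanti : StrictAnti Φ) (hΦbij : Function.Bijective Φ)
    (hinvl : Function.LeftInverse Φinv Φ) (hinvr : Function.RightInverse Φinv Φ)
    (l w γ₁ γ₂ : ℝ) (hl : 0 ≤ l) (hw : 0 ≤ w) (hγ₁ : 0 < γ₁)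
    (ε : ℝ) (hε : ε = -Φinv (Φ 0 + γ₂ ^ 2 / 2 - (γ₁ + 2 * l * w) ^ 2 / 2)) :
    ∀ a v : ℝ, a ≤ 0 →
      -ε ≤ Φinv (Φ a - (1 / 2) * (v * |v|) + γ₂ ^ 2 / 2) →
      (γ₁ + 2 * l * w ≤ v ∧ (a < 0 → γ₁ + 2 * l * w < v)) := by
  intro a v ha hbl
  set c := γ₁ + 2 * l * w with hc
  have hc0 : 0 < c := by positivity
  rw [hε, neg_neg] at hbl
  -- apply Φ to both sides
  have key : Φ a - (1 / 2) * (v * |v|) + γ₂ ^ 2 / 2 ≤ Φ 0 + γ₂ ^ 2 / 2 - c ^ 2 / 2 := by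
    have := hΦanti.antitone hbl
    rwa [hinvr, hinvr] at this
  have hΦa : Φ 0 ≤ Φ a := hΦanti.antitone ha
  have hvv : c ^ 2 ≤ v * |v| := by nlinarith
  have hv0 : 0 < v := by
    by_contra h
    push_neg at h
    have : v * |v| ≤ 0 := mul_nonpos_of_nonpos_of_nonneg h (abs_nonneg v)
    nlinarith
  have habs : |v| = v := abs_of_pos hv0
  rw [habs] at hvv
  constructor
  · nlinarith
  · intro ha'
    have hΦa' : Φ 0 < Φ a := hΦanti ha'
    have hvv' : c ^ 2 < v * v := by nlinarith [key, habs]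
    nlinarith
end

section
/- Let t0 be a real number; let Φ : ℝ → ℝ be a continuous, strictly decreasing bijection with inverse Φ⁻¹; let l ≥ 0, w ≥ 0, γ₁ > 0, and γ₂ be real numbers with γ₂ > γ₁ + 2·l·w; and define ε := −Φ⁻¹(Φ(0) + γ₂²/2 − (γ₁ + 2·l·w)²/2). Let h : [t0, ∞) → ℝ be differentiable and v : [t0, ∞) → ℝ be a function such that for all t ≥ t0: (i) v(t) − 2·l·w ≤ h'(t) ≤ v(t), and (ii) −ε ≤ Φ⁻¹(Φ(h(t)) − (1/2)·v(t)·|v(t)| + γ₂²/2) ≤ 0. If h(t0) ≤ 0, then there exists a finite time t_f ≥ t0 such that h(t_f) = 0 and γ₁ ≤ h'(t_f) ≤ γ₂. -/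
open Set

/-- Scalar trajectory form of Corollary 5 (docking): a trajectory remaining
in the boundary layer `{−ε ≤ H₁ ≤ 0}` of the relaxed safe set achieves
contact `h = 0` in finite time with approach rate in `[γ₁, γ₂]`. -/
theorem docking_finite_time
    (t0 : ℝ)
    (Φ Φinv : ℝ → ℝ)
    (hΦcont : Continuous Φ) (hΦanti : StrictAnti Φ) (hΦbij : Function.Bijective Φ)
    (hinvl : Function.LeftInverse Φinv Φ) (hinvr : Function.RightInverse Φinv Φ)
    (l w γ₁ γ₂ : ℝ) (hl : 0 ≤ l) (hw : 0 ≤ w) (hγ₁ : 0 < γ₁)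
    (hfeas : γ₂ > γ₁ + 2 * l * w)
    (ε : ℝ) (hε : ε = -Φinv (Φ 0 + γ₂ ^ 2 / 2 - (γ₁ + 2 * l * w) ^ 2 / 2))
    (h h' v : ℝ → ℝ)
    (hdiff : ∀ t ∈ Ici t0, HasDerivAt h (h' t) t)
    (hrate : ∀ t ∈ Ici t0, v t - 2 * l * w ≤ h' t ∧ h' t ≤ v t)
    (hlayer : ∀ t ∈ Ici t0,
      -ε ≤ Φinv (Φ (h t) - (1 / 2) * (v t * |v t|) + γ₂ ^ 2 / 2) ∧
      Φinv (Φ (h t) - (1 / 2) * (v t * |v t|) + γ₂ ^ 2 / 2) ≤ 0)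
    (hinit : h t0 ≤ 0) :
    ∃ tf : ℝ, t0 ≤ tf ∧ h tf = 0 ∧ γ₁ ≤ h' tf ∧ h' tf ≤ γ₂ := by
  have hΦanti' : Antitone Φ := hΦanti.antitone
  have hk0 : (0:ℝ) < γ₁ + 2 * l * w := by positivity
  have hγ₂0 : (0:ℝ) < γ₂ := lt_trans hk0 hfeas
  have hΦnegeps : Φ (-ε) = Φ 0 + γ₂ ^ 2 / 2 - (γ₁ + 2 * l * w) ^ 2 / 2 := by
    rw [hε, neg_neg]; exact hinvr _
  -- lower bound on v wherever h ≤ 0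
  have hbound : ∀ t ∈ Ici t0, h t ≤ 0 → γ₁ + 2 * l * w ≤ v t := by
    intro t ht hht
    obtain ⟨hL, hR⟩ := hlayer t ht
    have h2 : Φ (h t) - (1 / 2) * (v t * |v t|) + γ₂ ^ 2 / 2
        ≤ Φ 0 + γ₂ ^ 2 / 2 - (γ₁ + 2 * l * w) ^ 2 / 2 := by
      have := hΦanti' hL
      rwa [hinvr, hΦnegeps] at this
    have hΦh : Φ 0 ≤ Φ (h t) := hΦanti' hht
    have h3 : (γ₁ + 2 * l * w) ^ 2 / 2 ≤ (1 / 2) * (v t * |v t|) := by nlinarith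
    have hv0 : 0 < v t := by
      by_contra hv; push_neg at hv
      rw [abs_of_nonpos hv] at h3
      nlinarith
    rw [abs_of_pos hv0] at h3
    nlinarith
  -- upper bound on v at contact
  have hbound2 : ∀ t ∈ Ici t0, h t = 0 → v t ≤ γ₂ := by
    intro t ht hht
    obtain ⟨hL, hR⟩ := hlayer t ht
    have h1 : Φ 0 ≤ Φ (h t) - (1 / 2) * (v t * |v t|) + γ₂ ^ 2 / 2 := by
      have := hΦanti' hR
      rwa [hinvr] at this
    rw [hht] at h1
    have hv0 : 0 < v t := lt_of_lt_of_le hk0 (hbound t ht hht.le)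
    rw [abs_of_pos hv0] at h1
    nlinarith
  have final : ∀ t ∈ Ici t0, h t = 0 → γ₁ ≤ h' t ∧ h' t ≤ γ₂ := by
    intro t ht hht
    obtain ⟨hr1, hr2⟩ := hrate t ht
    have hb1 := hbound t ht hht.le
    have hb2 := hbound2 t ht hht
    constructor <;> linarith
  rcases eq_or_lt_of_le hinit with h0 | h0
  · exact ⟨t0, le_refl _, h0, final t0 (mem_Ici.mpr le_rfl) h0⟩
  · set T := t0 + (-h t0) / γ₁ with hTdef
    have hT0 : t0 ≤ T := by
      have h1 : 0 ≤ (-h t0) / γ₁ := div_nonneg (by linarith) hγ₁.le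
      exact le_add_of_nonneg_right h1
    have hcont : ContinuousOn h (Icc t0 T) := fun t ht =>
      ((hdiff t ht.1).continuousAt).continuousWithinAt
    by_cases hz : ∃ t ∈ Icc t0 T, h t = 0
    · obtain ⟨tf, htf, hzero⟩ := hz
      exact ⟨tf, htf.1, hzero, final tf htf.1 hzero⟩
    · exfalso
      push_neg at hz
      have hneg : ∀ t ∈ Icc t0 T, h t < 0 := by
        intro t ht
        by_contra hge; push_neg at hge
        have hsub : Icc t0 t ⊆ Icc t0 T := Icc_subset_Icc le_rfl ht.2
        have hivt := intermediate_value_Icc ht.1 (hcont.mono hsub)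
        have : (0:ℝ) ∈ Icc (h t0) (h t) := ⟨h0.le, hge⟩
        obtain ⟨c, hc, hc0⟩ := hivt this
        exact hz c (hsub hc) hc0
      have hdiffon : DifferentiableOn ℝ h (interior (Icc t0 T)) := by
        intro x hx
        rw [interior_Icc] at hx
        exact ((hdiff x hx.1.le).differentiableAt).differentiableWithinAt
      have hmain := (convex_Icc t0 T).mul_sub_le_image_sub_of_le_deriv hcont hdiffon
        (C := γ₁) (by
          intro x hx
          rw [interior_Icc] at hx
          have hx' : x ∈ Ici t0 := hx.1.le
          rw [(hdiff x hx').deriv]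
          have hb := hbound x hx' (hneg x ⟨hx.1.le, hx.2.le⟩).le
          have hr := (hrate x hx').1
          linarith)
        t0 ⟨le_rfl, hT0⟩ T ⟨hT0, le_rfl⟩ hT0
      have hTsub : γ₁ * (T - t0) = -h t0 := by
        rw [hTdef]
        field_simp
        ring
      have hTneg := hneg T ⟨hT0, le_rfl⟩
      linarith [hmain, hTsub]
end

section
/- Let t0 be a real number; let Φ : ℝ → ℝ be a continuous, strictly decreasing bijection with inverse Φ⁻¹; let l ≥ 0, w ≥ 0, γ₁ > 0, and γ₂ be real numbers with γ₂ > γ₁ + 2·l·w; define ε := −Φ⁻¹(Φ(0) + γ₂²/2 − (γ₁ + 2·l·w)²/2); let α be a class-K function with α(ε) = 2, and η₁ > 0. Let h : [t0, ∞) → ℝ be differentiable, v : [t0, ∞) → ℝ a function, W̃ : [t0, ∞) → ℝ with W̃(t) ≥ η₁ for all t, and suppose the function H(t) := Φ⁻¹(Φ(h(t)) − (1/2)·v(t)·|v(t)| + γ₂²/2) is differentiable and satisfies, for all t ≥ t0: (i) v(t) − 2·l·w ≤ h'(t) ≤ v(t); (ii) H(t) ≤ 0; (iii) H'(t) ≥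 α(−H(t))·W̃(t) − 2·W̃(t). If h(t0) ≤ 0, then there exists a finite time t_f ≥ t0 such that h(t_f) = 0 and 0 ≤ h'(t_f) ≤ γ₂. -/
set_option maxHeartbeats 1000000


open Set Filter

/-- If `f` has derivative `f'` on `[s, T]` and `f' ≥ c` on the interior,
then `f` grows at least linearly with rate `c`. -/
lemma lin_growth (f f' : ℝ → ℝ) (s T c : ℝ) (hsT : s ≤ T)
    (hd : ∀ t ∈ Set.Icc s T, HasDerivAt f (f' t) t)
    (hc : ∀ t ∈ Set.Ioo s T, c ≤ f' t) :
    f s + c * (T - s) ≤ f T := by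
  have hder : ∀ t ∈ Set.Icc s T, HasDerivAt (fun t => f t - c * t) (f' t - c) t := by
    intro t ht
    exact ((hd t ht).sub ((hasDerivAt_id t).const_mul c)).congr_deriv (by simp)
  have hg : MonotoneOn (fun t => f t - c * t) (Set.Icc s T) := by
    apply monotoneOn_of_deriv_nonneg (convex_Icc s T)
    · exact fun t ht => ((hder t ht).continuousAt).continuousWithinAt
    · intro t ht
      rw [interior_Icc] at ht
      exact ((hder t (Set.Ioo_subset_Icc_self ht)).differentiableAt).differentiableWithinAt
    · intro t ht
      rw [interior_Icc] at ht
      rw [(hder t (Set.Ioo_subset_Icc_self ht)).deriv]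
      have := hc t ht
      linarith
  have := hg (Set.left_mem_Icc.2 hsT) (Set.right_mem_Icc.2 hsT) hsT
  simp only at this
  linarith

/-- If `f u ≤ f x` for all `u` in a left neighborhood of `x`, then the
derivative of `f` at `x` is nonnegative. -/
lemma left_slope_nonneg (f : ℝ → ℝ) (a t1 x : ℝ) (h1x : t1 < x)
    (hd : HasDerivAt f a x)
    (hle : ∀ u ∈ Set.Ico t1 x, f u ≤ f x) : 0 ≤ a := by
  have hs : Tendsto (slope f x) (nhdsWithin x (Set.Iio x)) (nhds a) :=
    (hasDerivAt_iff_tendsto_slope.1 hd).mono_left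
      (nhdsWithin_mono x fun u hu => ne_of_lt hu)
  refine ge_of_tendsto hs ?_
  filter_upwards [Ioo_mem_nhdsLT h1x] with u hu
  have h1 : f u - f x ≤ 0 := by
    have := hle u ⟨le_of_lt hu.1, hu.2⟩
    linarith
  have h2 : u - x < 0 := by linarith [hu.2]
  rw [slope_def_field]
  exact div_nonneg_iff.2 (Or.inr ⟨h1, le_of_lt h2⟩)

/-- If `f x = 0` and `f` has negative derivative at `x`, then `f` is
negative at some point to the right of `x`. -/
lemma exists_neg_right (f : ℝ → ℝ) (a x : ℝ) (hd : HasDerivAt f a x)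
    (ha : a < 0) (hfx : f x = 0) : ∃ u, x < u ∧ f u < 0 := by
  have hs : Tendsto (slope f x) (nhdsWithin x (Set.Ioi x)) (nhds a) :=
    (hasDerivAt_iff_tendsto_slope.1 hd).mono_left
      (nhdsWithin_mono x fun u hu => ne_of_gt hu)
  have h1 : ∀ᶠ u in nhdsWithin x (Set.Ioi x), slope f x u < 0 :=
    hs.eventually_lt_const ha
  have h2 : ∀ᶠ u in nhdsWithin x (Set.Ioi x), x < u :=
    eventually_mem_nhdsWithin
  obtain ⟨u, hu1, hu2⟩ := (h1.and h2).exists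
  refine ⟨u, hu2, ?_⟩
  by_contra hge
  push_neg at hge
  rw [slope_def_field, hfx] at hu1
  have : 0 ≤ (f u - 0) / (u - x) := div_nonneg (by linarith) (by linarith)
  linarith

/-- Scalar trajectory form of Theorem 4 (landing): under safety of the
relaxed barrier `H₁` and the barrier differential inequality with `α`
satisfying `α(ε) = 2`, contact `h = 0` occurs in finite time with approach
rate in `[0, γ₂]`. -/
theorem landing_finite_time
    (t0 : ℝ)
    (Φ Φinv : ℝ → ℝ)
    (hΦcont : Continuous Φ) (hΦanti : StrictAnti Φ) (hΦbij : Function.Bijective Φ)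
    (hinvl : Function.LeftInverse Φinv Φ) (hinvr : Function.RightInverse Φinv Φ)
    (l w γ₁ γ₂ : ℝ) (hl : 0 ≤ l) (hw : 0 ≤ w) (hγ₁ : 0 < γ₁)
    (hfeas : γ₂ > γ₁ + 2 * l * w)
    (ε : ℝ) (hε : ε = -Φinv (Φ 0 + γ₂ ^ 2 / 2 - (γ₁ + 2 * l * w) ^ 2 / 2))
    -- α is a class-K function with α(ε) = 2
    (α : ℝ → ℝ) (hα0 : α 0 = 0)
    (hαmono : StrictMonoOn α (Ici 0))
    (hαcont : ContinuousOn α (Ici 0))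
    (hαε : α ε = 2)
    (η₁ : ℝ) (hη₁ : 0 < η₁)
    (h h' v : ℝ → ℝ)
    (hdiff : ∀ t ∈ Ici t0, HasDerivAt h (h' t) t)
    (W' : ℝ → ℝ) (hW' : ∀ t ∈ Ici t0, η₁ ≤ W' t)
    (H H' : ℝ → ℝ)
    (hHdef : ∀ t, H t = Φinv (Φ (h t) - (1 / 2) * (v t * |v t|) + γ₂ ^ 2 / 2))
    (hHdiff : ∀ t ∈ Ici t0, HasDerivAt H (H' t) t)
    (hrate : ∀ t ∈ Ici t0, v t - 2 * l * w ≤ h' t ∧ h' t ≤ v t)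
    (hsafe : ∀ t ∈ Ici t0, H t ≤ 0)
    (hbar : ∀ t ∈ Ici t0, H' t ≥ α (-(H t)) * W' t - 2 * W' t)
    (hinit : h t0 ≤ 0) :
    ∃ tf : ℝ, t0 ≤ tf ∧ h tf = 0 ∧ 0 ≤ h' tf ∧ h' tf ≤ γ₂ := by
  have hΦanti' : Antitone Φ := hΦanti.antitone
  have hlw : (0:ℝ) ≤ 2 * l * w := by positivity
  have hγ'pos : 0 < γ₁ + 2 * l * w := by linarith
  have hγ₂pos : 0 < γ₂ := lt_trans hγ'pos hfeas
  have ΦH : ∀ t, Φ (H t) = Φ (h t) - 1 / 2 * (v t * |v t|) + γ₂ ^ 2 / 2 := by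
    intro t; rw [hHdef t]; exact hinvr _
  have hΦneg : Φ (-ε) = Φ 0 + γ₂ ^ 2 / 2 - (γ₁ + 2 * l * w) ^ 2 / 2 := by
    have hh : -ε = Φinv (Φ 0 + γ₂ ^ 2 / 2 - (γ₁ + 2 * l * w) ^ 2 / 2) := by
      rw [hε]; ring
    rw [hh]; exact hinvr _
  have hsqlt : (γ₁ + 2 * l * w) ^ 2 < γ₂ ^ 2 := by nlinarith
  have hεpos : 0 < ε := by
    have h1 : Φ 0 < Φ 0 + γ₂ ^ 2 / 2 - (γ₁ + 2 * l * w) ^ 2 / 2 := by linarith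
    have h2 : Φinv (Φ 0 + γ₂ ^ 2 / 2 - (γ₁ + 2 * l * w) ^ 2 / 2) < Φinv (Φ 0) := by
      by_contra hle
      push_neg at hle
      have := hΦanti' hle
      rw [hinvr, hinvr] at this
      linarith
    rw [hinvl 0] at h2
    rw [hε]
    linarith
  -- key rate bound: if h < 0 and Φ(H) is small enough then h' is large
  have key : ∀ (γx t : ℝ), 0 < γx → t0 ≤ t → h t < 0 →
      Φ (H t) ≤ Φ 0 + γ₂ ^ 2 / 2 - γx ^ 2 / 2 → γx - 2 * l * w < h' t := by
    intro γx t hγx ht hht hΦb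
    have h0 : Φ 0 < Φ (h t) := hΦanti hht
    have hv : γx ^ 2 < v t * |v t| := by
      have := ΦH t; linarith
    have hvpos : 0 < v t := by
      by_contra hvn
      push_neg at hvn
      rw [abs_of_nonpos hvn] at hv
      nlinarith
    rw [abs_of_pos hvpos] at hv
    have hvg : γx < v t := by nlinarith
    linarith [(hrate t ht).1]
  -- rate upper bound at a contact point
  have rate_le : ∀ t, t0 ≤ t → h t = 0 → h' t ≤ γ₂ := by
    intro t ht h0
    have h1 : Φ 0 ≤ Φ (H t) := hΦanti' (hsafe t ht)
    have h2 := ΦH t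
    rw [h0] at h2
    have hv : v t * |v t| ≤ γ₂ ^ 2 := by linarith
    have hvle : v t ≤ γ₂ := by
      rcases le_or_gt (v t) γ₂ with hle | hlt
      · exact hle
      · have hvp : 0 < v t := hγ₂pos.trans hlt
        rw [abs_of_pos hvp] at hv
        nlinarith
    linarith [(hrate t ht).2]
  -- the barrier derivative is nonnegative when H < -ε
  have Hder_nonneg : ∀ t, t0 ≤ t → H t < -ε → 0 ≤ H' t := by
    intro t ht hHt
    have hεH : ε < -(H t) := by linarith
    have hα2 : 2 < α (-(H t)) := by
      calc 2 = α ε := hαε.symm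
      _ < α (-(H t)) := hαmono (le_of_lt hεpos) (by simp only [mem_Ici]; linarith) hεH
    have hW := hW' t ht
    have hb := hbar t ht
    nlinarith
  -- forward invariance of { H ≥ -ε }
  have invariance : ∀ s t, t0 ≤ s → s ≤ t → -ε ≤ H s → -ε ≤ H t := by
    intro s t hs hst hHs
    by_contra hHt
    push_neg at hHt
    have hcont : ContinuousOn H (Set.Icc s t) := fun u hu =>
      ((hHdiff u (le_trans hs hu.1)).continuousAt).continuousWithinAt
    set S := Set.Icc s t ∩ H ⁻¹' Set.Ici (-ε) with hS
    have hSc : IsClosed S := hcont.preimage_isClosed_of_isClosed isClosed_Icc isClosed_Ici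
    have hScomp : IsCompact S :=
      isCompact_Icc.of_isClosed_subset hSc Set.inter_subset_left
    have hsS : s ∈ S := ⟨⟨le_refl s, hst⟩, hHs⟩
    set σ := sSup S with hσ
    have hσS : σ ∈ S := hScomp.sSup_mem ⟨s, hsS⟩
    obtain ⟨⟨hσ1, hσ2⟩, hσH⟩ := hσS
    have hσH' : -ε ≤ H σ := hσH
    have hσt : σ < t := by
      rcases lt_or_eq_of_le hσ2 with hlt | heq
      · exact hlt
      · exfalso; rw [heq] at hσH'; linarith
    have hint : ∀ u ∈ Set.Ioo σ t, 0 ≤ H' u := by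
      intro u hu
      have hut0 : t0 ≤ u := le_trans hs (le_trans hσ1 (le_of_lt hu.1))
      have hHu : H u < -ε := by
        by_contra hge
        push_neg at hge
        have huS : u ∈ S := ⟨⟨le_trans hσ1 (le_of_lt hu.1), le_of_lt hu.2⟩, hge⟩
        have := le_csSup hScomp.bddAbove huS
        linarith [hu.1]
      exact Hder_nonneg u hut0 hHu
    have := lin_growth H H' σ t 0 (le_of_lt hσt)
      (fun u hu => hHdiff u (le_trans hs (le_trans hσ1 hu.1))) hint
    simp only [zero_mul] at this
    linarith
  -- escape lemma: h cannot stay negative forever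
  have escape : ∀ t1, t0 ≤ t1 → ¬ (∀ t, t1 ≤ t → h t < 0) := by
    intro t1 ht1 hall
    have grow : ∀ s c, t1 ≤ s → 0 < c → (∀ t, s ≤ t → c ≤ h' t) → False := by
      intro s c hs hc hr
      have hhs : h s < 0 := hall s hs
      set T := s + (1 - h s) / c with hT
      have hsT : s ≤ T := by
        have : 0 < (1 - h s) / c := div_pos (by linarith) hc
        rw [hT]; linarith
      have hgr := lin_growth h h' s T c hsT
        (fun u hu => hdiff u (le_trans (le_trans ht1 hs) hu.1))
        (fun u hu => hr u (le_of_lt hu.1))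
      have hmul : c * (T - s) = 1 - h s := by
        rw [hT]
        field_simp
        ring
      have := hall T (le_trans hs hsT)
      linarith
    by_cases hA : ∃ s, t1 ≤ s ∧ -ε ≤ H s
    · obtain ⟨s, hs1, hsH⟩ := hA
      apply grow s γ₁ hs1 hγ₁
      intro t hst
      have htt0 : t0 ≤ t := le_trans ht1 (le_trans hs1 hst)
      have hHt : -ε ≤ H t := invariance s t (le_trans ht1 hs1) hst hsH
      have hΦHt : Φ (H t) ≤ Φ 0 + γ₂ ^ 2 / 2 - (γ₁ + 2 * l * w) ^ 2 / 2 := by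
        rw [← hΦneg]; exact hΦanti' hHt
      have := key (γ₁ + 2 * l * w) t hγ'pos htt0 (hall t (le_trans hs1 hst)) hΦHt
      linarith
    · push_neg at hA
      set γm := γ₁ / 2 + 2 * l * w with hγm
      have hγmpos : 0 < γm := by rw [hγm]; linarith
      have hγmlt : γm < γ₁ + 2 * l * w := by rw [hγm]; linarith
      set m := Φinv (Φ 0 + γ₂ ^ 2 / 2 - γm ^ 2 / 2) with hm
      have hΦm : Φ m = Φ 0 + γ₂ ^ 2 / 2 - γm ^ 2 / 2 := hinvr _
      have hmlt : m < -ε := by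
        have h1 : Φ (-ε) < Φ m := by rw [hΦm, hΦneg]; nlinarith
        by_contra hge
        push_neg at hge
        have := hΦanti' hge
        linarith
      by_cases hB : ∃ T, t1 ≤ T ∧ m ≤ H T
      · obtain ⟨T, hT1, hTm⟩ := hB
        apply grow T (γ₁ / 2) hT1 (by linarith)
        intro t hTt
        have htt0 : t0 ≤ t := le_trans ht1 (le_trans hT1 hTt)
        have hmono : H T ≤ H t := by
          have := lin_growth H H' T t 0 hTt
            (fun u hu => hHdiff u (le_trans ht1 (le_trans hT1 hu.1)))
            (fun u hu => Hder_nonneg u (le_trans ht1 (le_trans hT1 (le_of_lt hu.1)))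
              (hA u (le_trans hT1 (le_of_lt hu.1))))
          simp only [zero_mul] at this
          linarith
        have hΦHt : Φ (H t) ≤ Φ 0 + γ₂ ^ 2 / 2 - γm ^ 2 / 2 := by
          rw [← hΦm]; exact hΦanti' (le_trans hTm hmono)
        have := key γm t hγmpos htt0 (hall t (le_trans hT1 hTt)) hΦHt
        rw [hγm] at this
        linarith
      · push_neg at hB
        have hmneg : ε < -m := by linarith
        have hαm : 2 < α (-m) := by
          calc 2 = α ε := hαε.symm
          _ < α (-m) := hαmono (le_of_lt hεpos) (by simp only [mem_Ici]; linarith) hmneg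
        set c := (α (-m) - 2) * η₁ with hc
        have hcpos : 0 < c := mul_pos (by linarith) hη₁
        have hHd : ∀ t, t1 ≤ t → c ≤ H' t := by
          intro t ht
          have htt0 : t0 ≤ t := le_trans ht1 ht
          have hHtm : H t < m := hB t ht
          have h1 : α (-m) ≤ α (-(H t)) :=
            hαmono.monotoneOn (by simp only [mem_Ici]; linarith)
              (by simp only [mem_Ici]; linarith) (by linarith)
          have hW := hW' t htt0
          have hb := hbar t htt0
          rw [hc]
          nlinarith
        set T := t1 + (-ε - H t1 + 1) / c with hT
        have ht1T : t1 ≤ T := by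
          have h0 : 0 < -ε - H t1 + 1 := by linarith [hA t1 (le_refl t1)]
          have := div_pos h0 hcpos
          rw [hT]; linarith
        have hgr := lin_growth H H' t1 T c ht1T
          (fun u hu => hHdiff u (le_trans ht1 hu.1))
          (fun u hu => hHd u (le_of_lt hu.1))
        have hmul : c * (T - t1) = -ε - H t1 + 1 := by
          rw [hT]
          field_simp
          ring
        have := hA T ht1T
        linarith
  -- main argument
  by_contra hcon
  push_neg at hcon
  have hneg : ∀ t, t0 ≤ t → h t = 0 → h' t < 0 := by
    intro t ht h0
    by_contra hge
    push_neg at hge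
    exact absurd (rate_le t ht h0) (not_le.2 (hcon t ht h0 hge))
  obtain ⟨t1, ht1, hht1⟩ : ∃ t1, t0 ≤ t1 ∧ h t1 < 0 := by
    rcases lt_or_eq_of_le hinit with h0 | h0
    · exact ⟨t0, le_refl t0, h0⟩
    · have hd0 := hdiff t0 (self_mem_Ici)
      have hneg0 := hneg t0 (le_refl t0) h0
      obtain ⟨u, hu1, hu2⟩ := exists_neg_right h (h' t0) t0 hd0 hneg0 h0
      exact ⟨u, le_of_lt hu1, hu2⟩
  have hesc := escape t1 ht1
  push_neg at hesc
  obtain ⟨t2, ht2, hht2⟩ := hesc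
  have hcont : ContinuousOn h (Set.Icc t1 t2) := fun u hu =>
    ((hdiff u (le_trans ht1 hu.1)).continuousAt).continuousWithinAt
  set Z := Set.Icc t1 t2 ∩ h ⁻¹' {0} with hZ
  have hZne : Z.Nonempty := by
    obtain ⟨u, hu, hu0⟩ := intermediate_value_Icc ht2 hcont ⟨le_of_lt hht1, hht2⟩
    exact ⟨u, hu, hu0⟩
  have hZc : IsClosed Z := hcont.preimage_isClosed_of_isClosed isClosed_Icc isClosed_singleton
  have hZcomp : IsCompact Z := isCompact_Icc.of_isClosed_subset hZc Set.inter_subset_left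
  set tf := sInf Z with htf
  have htfZ : tf ∈ Z := hZcomp.sInf_mem hZne
  obtain ⟨⟨htf1, htf2⟩, htf0⟩ := htfZ
  have htf0' : h tf = 0 := htf0
  have htft0 : t0 ≤ tf := le_trans ht1 htf1
  have ht1tf : t1 < tf := by
    rcases lt_or_eq_of_le htf1 with hlt | heq
    · exact hlt
    · exfalso; rw [← heq] at htf0'; linarith
  have hle : ∀ u ∈ Set.Ico t1 tf, h u ≤ h tf := by
    rintro u ⟨hu1, hu2⟩
    rw [htf0']
    by_contra hpos
    push_neg at hpos
    have hut2 : u ≤ t2 := le_trans (le_of_lt hu2) htf2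
    have hcont' : ContinuousOn h (Set.Icc t1 u) :=
      hcont.mono (Set.Icc_subset_Icc le_rfl hut2)
    obtain ⟨z, hz, hz0⟩ := intermediate_value_Icc hu1 hcont' ⟨le_of_lt hht1, le_of_lt hpos⟩
    have hzZ : z ∈ Z := ⟨⟨hz.1, le_trans hz.2 hut2⟩, hz0⟩
    have := csInf_le hZcomp.bddBelow hzZ
    linarith [hz.2]
  have h'nonneg := left_slope_nonneg h (h' tf) t1 tf ht1tf (hdiff tf htft0) hle
  exact absurd h'nonneg (not_le.2 (hneg tf htft0 htf0'))
end
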